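/- Let (X, Y) be a complete cotorsion pair in K^{[-1,0]}(proj Λ). Then X = CCone(X∩Y, X∩Y): every X ∈ X fits into a conflation X ↣ U₀ ↠ U₁ with U₀, U₁ ∈ X ∩ Y. -/

import Mathlib

/-! **Statement 14.**  `K^{[-1,0]}(proj Λ)` is realized concretely inside the homotopy
category of cochain complexes of `Λ`-modules; its conflations are the distinguished
triangles with all terms in the subcategory, and `E(A, B) = Hom(A, B⟦1⟧)`. -/

open CategoryTheory Limits Pretriangulated

namespace Stmt14

universe u
variable (Λ : Type u) [Ring Λ]

/-- The homotopy category of cochain complexes of `Λ`-modules. -/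
abbrev HtpyCat := HomotopyCategory (ModuleCat.{u} Λ) (ComplexShape.up ℤ)

/-- The subcategory `K^{[-1,0]}(proj Λ)`. -/
def KLam : Set (HtpyCat Λ) :=
  {X | ∃ C : CochainComplex (ModuleCat.{u} Λ) ℤ,
    (∀ i : ℤ, i ≠ -1 → i ≠ 0 → IsZero (C.X i)) ∧
    Module.Projective Λ (C.X (-1)) ∧ Module.Projective Λ (C.X 0) ∧
    Module.Finite Λ (C.X (-1)) ∧ Module.Finite Λ (C.X 0) ∧
    Nonempty (X ≅ (HomotopyCategory.quotient _ _).obj C)}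

/-- Conflations of `K^{[-1,0]}(proj Λ)`. -/
def IsConflation {X Y Z : HtpyCat Λ} (f : X ⟶ Y) (g : Y ⟶ Z) : Prop :=
  X ∈ KLam Λ ∧ Y ∈ KLam Λ ∧ Z ∈ KLam Λ ∧
    ∃ h : Z ⟶ X⟦(1 : ℤ)⟧, Triangle.mk f g h ∈ distTriang (HtpyCat Λ)

/-- `(X, Y)` is a cotorsion pair: `Y = X^{⊥₁}` and `X = ^{⊥₁}Y` with respect to
`E(−,−) = Hom(−, −⟦1⟧)`. -/
def IsCotorsionPair (X Y : Set (HtpyCat Λ)) : Prop :=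
  X ⊆ KLam Λ ∧ Y ⊆ KLam Λ ∧
  (∀ A ∈ KLam Λ, (A ∈ X ↔ ∀ B ∈ Y, ∀ φ : A ⟶ B⟦(1 : ℤ)⟧, φ = 0)) ∧
  (∀ B ∈ KLam Λ, (B ∈ Y ↔ ∀ A ∈ X, ∀ φ : A ⟶ B⟦(1 : ℤ)⟧, φ = 0))

/-- The cotorsion pair `(X, Y)` is complete: `K = Cone(Y, X) = CCone(Y, X)`. -/
def IsCompleteCotorsionPair (X Y : Set (HtpyCat Λ)) : Prop :=
  IsCotorsionPair Λ X Y ∧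
  (∀ M ∈ KLam Λ, ∃ (B A : HtpyCat Λ) (f : B ⟶ A) (g : A ⟶ M),
    B ∈ Y ∧ A ∈ X ∧ IsConflation Λ f g) ∧
  (∀ M ∈ KLam Λ, ∃ (B A : HtpyCat Λ) (f : M ⟶ B) (g : B ⟶ A),
    B ∈ Y ∧ A ∈ X ∧ IsConflation Λ f g)

/-! Objects of `K^{[-1,0]}(proj Λ)` are concentrated in two adjacent degrees, so there are no
morphisms `A ⟶ C⟦2⟧` between them: `E²` vanishes. Given `A ∈ X`, completeness yields a
conflation `A ↣ B ↠ A'` with `B ∈ Y` and `A' ∈ X`. Then `B ∈ X`, because `X = ^{⊥₁}Y` is closed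
under extensions, and `A' ∈ Y`, because for `A'' ∈ X` the exact sequence
`E(A'', B) → E(A'', A') → E²(A'', A)` has vanishing outer terms. -/

section

variable {C : Type*} [Category C] [Preadditive C]

theorem hom_shift_two_eq_zero {P Q : CochainComplex C ℤ}
    (hP : ∀ i : ℤ, i ≠ -1 → i ≠ 0 → IsZero (P.X i))
    (hQ : ∀ i : ℤ, i ≠ -1 → i ≠ 0 → IsZero (Q.X i)) (ψ : P ⟶ Q⟦(2 : ℤ)⟧) :
    ψ = 0 := by
  ext i : 1
  by_cases h₁ : i = -1
  · subst h₁
    exact (IsZero.of_iso (hQ 1 (by norm_num) (by norm_num))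
      (Q.shiftFunctorObjXIso 2 (-1) 1 (by norm_num))).eq_of_tgt _ _
  by_cases h₀ : i = 0
  · subst h₀
    exact (IsZero.of_iso (hQ 2 (by norm_num) (by norm_num))
      (Q.shiftFunctorObjXIso 2 0 2 (by norm_num))).eq_of_tgt _ _
  exact (hP i h₁ h₀).eq_of_src _ _

theorem hom_quotient_shift_two_eq_zero {P Q : CochainComplex C ℤ}
    (hP : ∀ i : ℤ, i ≠ -1 → i ≠ 0 → IsZero (P.X i))
    (hQ : ∀ i : ℤ, i ≠ -1 → i ≠ 0 → IsZero (Q.X i))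
    (χ : (HomotopyCategory.quotient C (ComplexShape.up ℤ)).obj P ⟶
      ((HomotopyCategory.quotient C (ComplexShape.up ℤ)).obj Q)⟦(2 : ℤ)⟧) :
    χ = 0 := by
  let e := ((HomotopyCategory.quotient C (ComplexShape.up ℤ)).commShiftIso (2 : ℤ)).app Q
  obtain ⟨ψ, hψ⟩ := (HomotopyCategory.quotient C (ComplexShape.up ℤ)).map_surjective (χ ≫ e.inv)
  rw [← cancel_mono e.inv, ← hψ, hom_shift_two_eq_zero hP hQ ψ, Functor.map_zero, zero_comp]

end

theorem hom_shift_shift_eq_zero {A C : HtpyCat Λ} (hA : A ∈ KLam Λ) (hC : C ∈ KLam Λ)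
    (φ : A ⟶ C⟦(1 : ℤ)⟧⟦(1 : ℤ)⟧) : φ = 0 := by
  obtain ⟨P, hP, -, -, -, -, ⟨eA⟩⟩ := hA
  obtain ⟨Q, hQ, -, -, -, -, ⟨eC⟩⟩ := hC
  let e : C⟦(1 : ℤ)⟧⟦(1 : ℤ)⟧ ≅ ((HomotopyCategory.quotient _ _).obj Q)⟦(2 : ℤ)⟧ :=
    (shiftFunctorAdd' (HtpyCat Λ) (1 : ℤ) 1 2 (by norm_num)).symm.app C ≪≫
      (shiftFunctor (HtpyCat Λ) (2 : ℤ)).mapIso eC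
  have h := hom_quotient_shift_two_eq_zero hP hQ (eA.inv ≫ φ ≫ e.hom)
  rwa [← cancel_epi eA.inv, ← cancel_mono e.hom, comp_zero, zero_comp, Category.assoc]

namespace IsCotorsionPair

variable {Λ} {X Y : Set (HtpyCat Λ)} (hXY : IsCotorsionPair Λ X Y)
  {A B A' : HtpyCat Λ} {f : A ⟶ B} {g : B ⟶ A'}
include hXY

theorem mem_left_of_isConflation (hfg : IsConflation Λ f g) (hA : A ∈ X) (hA' : A' ∈ X) :
    B ∈ X := by
  obtain ⟨hXK, -, hX, -⟩ := hXY
  obtain ⟨-, hBK, -, _, hT⟩ := hfg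
  rw [hX B hBK]
  intro D hD φ
  obtain ⟨ψ, hφ⟩ := Triangle.yoneda_exact₂ _ hT φ ((hX A (hXK hA)).1 hA D hD (f ≫ φ))
  rw [hφ, (hX A' (hXK hA')).1 hA' D hD ψ]
  exact comp_zero

theorem mem_right_of_isConflation (hfg : IsConflation Λ f g) (hB : B ∈ Y) : A' ∈ Y := by
  obtain ⟨hXK, hYK, -, hY⟩ := hXY
  obtain ⟨hAK, -, hA'K, _, hT⟩ := hfg
  rw [hY A' hA'K]
  intro D hD φ
  obtain ⟨ψ, hφ⟩ := Triangle.coyoneda_exact₃ _ (Triangle.shift_distinguished _ hT 1) φ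
    (hom_shift_shift_eq_zero Λ (hXK hD) hAK _)
  rw [hφ, (hY B (hYK hB)).1 hB D hD ψ]
  exact zero_comp

end IsCotorsionPair

/-- Let `(X, Y)` be a complete cotorsion pair in `K^{[-1,0]}(proj Λ)`.
Then `X = CCone(X ∩ Y, X ∩ Y)`: every `A ∈ X` fits into a conflation `A ↣ U₀ ↠ U₁` with
`U₀, U₁ ∈ X ∩ Y`. -/
theorem stmt14 (X Y : Set (HtpyCat Λ)) (hXY : IsCompleteCotorsionPair Λ X Y) :
    ∀ A ∈ X, ∃ (U₀ U₁ : HtpyCat Λ) (f : A ⟶ U₀) (g : U₀ ⟶ U₁),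
      U₀ ∈ X ∩ Y ∧ U₁ ∈ X ∩ Y ∧ IsConflation Λ f g := by
  obtain ⟨hcot, -, hcone⟩ := hXY
  intro A hA
  obtain ⟨B, A', f, g, hB, hA', hfg⟩ := hcone A (hcot.1 hA)
  exact ⟨B, A', f, g, ⟨hcot.mem_left_of_isConflation hfg hA hA', hB⟩,
    ⟨hA', hcot.mem_right_of_isConflation hfg hB⟩, hfg⟩

end Stmt14
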